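/- arXiv:hep-th/0101130 — 2 statements merged into one kernel-verified Lean document; each statement's English description precedes it below -/
import Mathlib

section
/- With Γ^{±μ} satisfying the Clifford relations {Γ^{±μ},Γ^{±ν}} = 0 and {Γ^μ, Γ^{-ν}} = δ^{μν}, the dynamical Dirac–Connes operator 𝒟_dyn = ∑_μ (Γ^μ ∂_μ + Γ^{-μ} ∂_{-μ}) satisfies the physical square-root condition 𝒟_dyn² = Δ, where Δ = ∑_μ ∂_μ ∂_{-μ} is the lattice Laplacian. -/
/-- Physical square-root condition: with `∂_{±μ} = T_{±μ} - 1`, the dynamical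
Dirac-Connes operator `𝒟_dyn = ∑_μ (Γ^μ ∂_μ + Γ^{-μ} ∂_{-μ})` satisfies
`𝒟_dyn² = Δ = ∑_μ ∂_μ ∂_{-μ}`. -/
theorem physical_square_root_condition
    (A : Type*) [Ring A] [Algebra ℂ A] (d : ℕ)
    (Γp Γm Tp Tm : Fin d → A)
    (hpp : ∀ μ ν, Γp μ * Γp ν + Γp ν * Γp μ = 0)
    (hmm : ∀ μ ν, Γm μ * Γm ν + Γm ν * Γm μ = 0)
    (hpm : ∀ μ ν, Γp μ * Γm ν + Γm ν * Γp μ = if μ = ν then 1 else 0)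
    (hTinv : ∀ μ, Tp μ * Tm μ = 1 ∧ Tm μ * Tp μ = 1)
    (hTcomm : ∀ μ ν, ∀ S ∈ ({Tp, Tm} : Set (Fin d → A)), ∀ S' ∈ ({Tp, Tm} : Set (Fin d → A)),
      S μ * S' ν = S' ν * S μ)
    (hTΓ : ∀ μ ν, ∀ S ∈ ({Tp, Tm} : Set (Fin d → A)), ∀ G ∈ ({Γp, Γm} : Set (Fin d → A)),
      S μ * G ν = G ν * S μ) :
    (∑ μ, (Γp μ * (Tp μ - 1) + Γm μ * (Tm μ - 1))) ^ 2
      = ∑ μ, (Tp μ - 1) * (Tm μ - 1) := by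
  have hTp : Tp ∈ ({Tp, Tm} : Set (Fin d → A)) := Set.mem_insert _ _
  have hTm : Tm ∈ ({Tp, Tm} : Set (Fin d → A)) := Set.mem_insert_of_mem _ rfl
  have hΓp : Γp ∈ ({Γp, Γm} : Set (Fin d → A)) := Set.mem_insert _ _
  have hΓm : Γm ∈ ({Γp, Γm} : Set (Fin d → A)) := Set.mem_insert_of_mem _ rfl
  -- differences commute with gammas
  have cdΓ : ∀ S ∈ ({Tp, Tm} : Set (Fin d → A)), ∀ G ∈ ({Γp, Γm} : Set (Fin d → A)),
      ∀ μ ν, (S μ - 1) * G ν = G ν * (S μ - 1) := by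
    intro S hS G hG μ ν
    rw [sub_mul, mul_sub, hTΓ μ ν S hS G hG, one_mul, mul_one]
  -- differences commute with each other
  have cdd : ∀ S ∈ ({Tp, Tm} : Set (Fin d → A)), ∀ S' ∈ ({Tp, Tm} : Set (Fin d → A)),
      ∀ μ ν, (S μ - 1) * (S' ν - 1) = (S' ν - 1) * (S μ - 1) := by
    intro S hS S' hS' μ ν
    simp only [sub_mul, mul_sub, one_mul, mul_one, hTcomm μ ν S hS S' hS']
    abel
  have key : ∀ G1 G2 t1 t2 : A, t1 * G2 = G2 * t1 → t2 * G1 = G1 * t2 →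
      t1 * t2 = t2 * t1 →
      G1 * t1 * (G2 * t2) + G2 * t2 * (G1 * t1) = (G1 * G2 + G2 * G1) * (t1 * t2) := by
    intro G1 G2 t1 t2 h1 h2 h3
    have e1 : G1 * t1 * (G2 * t2) = G1 * G2 * (t1 * t2) := by
      rw [mul_assoc G1 t1, ← mul_assoc t1, h1, mul_assoc G2, ← mul_assoc G1]
    have e2 : G2 * t2 * (G1 * t1) = G2 * G1 * (t1 * t2) := by
      rw [mul_assoc G2 t2, ← mul_assoc t2, h2, mul_assoc G1, ← mul_assoc G2, ← h3]
    rw [e1, e2, add_mul]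
  have expand : ∀ x y z w : A, (x + y) * (z + w) + (z + w) * (x + y)
      = (x * z + z * x) + ((x * w + w * x) + ((y * z + z * y) + (y * w + w * y))) := by
    intros; noncomm_ring
  set a : Fin d → A := fun μ => Γp μ * (Tp μ - 1) + Γm μ * (Tm μ - 1) with ha
  set D : Fin d → A := fun μ => (Tp μ - 1) * (Tm μ - 1) with hD
  have hAC : ∀ μ ν, a μ * a ν + a ν * a μ = if μ = ν then D μ + D μ else 0 := by
    intro μ ν
    simp only [ha, hD]
    rw [expand,
      key (Γp μ) (Γp ν) _ _ (cdΓ Tp hTp Γp hΓp μ ν) (cdΓ Tp hTp Γp hΓp ν μ)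
        (cdd Tp hTp Tp hTp μ ν),
      key (Γp μ) (Γm ν) _ _ (cdΓ Tp hTp Γm hΓm μ ν) (cdΓ Tm hTm Γp hΓp ν μ)
        (cdd Tp hTp Tm hTm μ ν),
      key (Γm μ) (Γp ν) _ _ (cdΓ Tm hTm Γp hΓp μ ν) (cdΓ Tp hTp Γm hΓm ν μ)
        (cdd Tm hTm Tp hTp μ ν),
      key (Γm μ) (Γm ν) _ _ (cdΓ Tm hTm Γm hΓm μ ν) (cdΓ Tm hTm Γm hΓm ν μ)
        (cdd Tm hTm Tm hTm μ ν),
      hpp μ ν, hmm μ ν, hpm μ ν]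
    have h4 : Γm μ * Γp ν + Γp ν * Γm μ = if μ = ν then 1 else 0 := by
      rw [add_comm, hpm ν μ]
      simp [eq_comm]
    rw [h4]
    by_cases h : μ = ν
    · subst h
      simp [cdd Tm hTm Tp hTp μ μ]
    · simp [h]
  have hsq : (∑ μ, a μ) ^ 2 = ∑ μ, ∑ ν, a μ * a ν := by
    rw [sq, Finset.sum_mul_sum]
  have hT2 : (∑ μ, ∑ ν, a μ * a ν) + (∑ μ, ∑ ν, a μ * a ν) = (∑ μ, D μ) + (∑ μ, D μ) := by
    nth_rewrite 2 [Finset.sum_comm]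
    rw [← Finset.sum_add_distrib, ← Finset.sum_add_distrib]
    refine Finset.sum_congr rfl fun μ _ => ?_
    rw [← Finset.sum_add_distrib]
    calc ∑ ν, (a μ * a ν + a ν * a μ)
        = ∑ ν, if μ = ν then D μ + D μ else 0 :=
          Finset.sum_congr rfl fun ν _ => hAC μ ν
      _ = D μ + D μ := by simp
  have h2 : (2 : ℂ) • (∑ μ, ∑ ν, a μ * a ν) = (2 : ℂ) • (∑ μ, D μ) := by
    rw [two_smul, two_smul]; exact hT2
  have hfin : (∑ μ, ∑ ν, a μ * a ν) = ∑ μ, D μ := by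
    calc (∑ μ, ∑ ν, a μ * a ν) = (2 : ℂ)⁻¹ • ((2 : ℂ) • ∑ μ, ∑ ν, a μ * a ν) := by
          rw [smul_smul, inv_mul_cancel₀ (two_ne_zero (α := ℂ)), one_smul]
      _ = (2 : ℂ)⁻¹ • ((2 : ℂ) • ∑ μ, D μ) := by rw [h2]
      _ = ∑ μ, D μ := by rw [smul_smul, inv_mul_cancel₀ (two_ne_zero (α := ℂ)), one_smul]
  rw [hsq, hfin]
end

section
/- For d = 1 with Γ¹ = [[0,0],[i,0]], Γ^{-1} = (Γ¹)†, the Dirac–Connes action equals the staggered action under the double-spacing map: for any finitely supported φ : ℤ → ℂ, setting ψ(x) = (φ(2x)/√2, φ(2x+1)/√2) ∈ ℂ², one has ∑_{x∈ℤ} ψ(x)† (𝒟_dyn ψ)(x) = ∑_{n∈ℤ} \overline{φ(n)} (𝒟_S φ)(n), where 𝒟_dyn = Γ¹∂_+ + Γ^{-1}∂_− with (∂_± ψ)(x) = ψ(x±1) − ψ(x), and (𝒟_S φ)(n) = i·(φ(n+1) − φ(n−1))/2. -/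
/-!
Writing `ψ = (a, b)`, one has `𝒟_dyn ψ (x) = (-i (b(x-1) - b(x)), i (a(x+1) - a(x)))`, so the
Dirac–Connes density at `x` pairs `φ(2x)` with `φ(2x ± 1)` and `φ(2x+1)` with `φ(2x+2), φ(2x)`;
the two factors `1/√2` give the `1/2`. Hence it is the staggered density at `2x` plus that at
`2x + 1`, and summing over `x` runs over all even and odd sites of `ℤ`.
-/

open Complex ComplexConjugate Matrix

theorem finsum_eq_finsum_even_add_odd {M : Type*} [AddCommMonoid M] {f : ℤ → M}
    (hf : f.HasFiniteSupport) : ∑ᶠ n, f n = ∑ᶠ x, (f (2 * x) + f (2 * x + 1)) := by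
  have hfe : (f ∘ (Int.divModEquiv 2).symm).HasFiniteSupport :=
    hf.comp_of_injective (Int.divModEquiv 2).symm.injective
  rw [← finsum_comp_equiv (Int.divModEquiv 2).symm]
  refine (finsum_curry _ hfe).trans (finsum_congr fun x => ?_)
  simp [finsum_eq_sum_of_fintype, Fin.sum_univ_two, mul_comm]

def gammaOne : Matrix (Fin 2) (Fin 2) ℂ := !![0, 0; I, 0]

noncomputable def doubleSpacing (φ : ℤ → ℂ) (x : ℤ) : Fin 2 → ℂ :=
  ![φ (2 * x) / (Real.sqrt 2 : ℂ), φ (2 * x + 1) / (Real.sqrt 2 : ℂ)]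

def diracDyn (χ : ℤ → Fin 2 → ℂ) (x : ℤ) : Fin 2 → ℂ :=
  gammaOne *ᵥ (χ (x + 1) - χ x) + gammaOneᴴ *ᵥ (χ (x - 1) - χ x)

noncomputable def staggeredDirac (φ : ℤ → ℂ) (n : ℤ) : ℂ := I * (φ (n + 1) - φ (n - 1)) / 2

lemma diracDyn_apply (χ : ℤ → Fin 2 → ℂ) (x : ℤ) :
    diracDyn χ x = ![-I * (χ (x - 1) 1 - χ x 1), I * (χ (x + 1) 0 - χ x 0)] := by
  ext i; fin_cases i <;> simp [diracDyn, gammaOne, dotProduct, Fin.sum_univ_two]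

lemma conj_div_sqrt_two_mul_div_sqrt_two (z w : ℂ) :
    conj (z / (Real.sqrt 2 : ℂ)) * w / (Real.sqrt 2 : ℂ) = conj z * w / 2 := by
  rw [map_div₀, conj_ofReal, div_mul_eq_mul_div, div_div, ← ofReal_mul,
    Real.mul_self_sqrt zero_le_two, ofReal_ofNat]

lemma sum_conj_doubleSpacing_mul_diracDyn (φ : ℤ → ℂ) (x : ℤ) :
    ∑ i, conj (doubleSpacing φ x i) * diracDyn (doubleSpacing φ) x i =
      conj (φ (2 * x)) * staggeredDirac φ (2 * x) +
        conj (φ (2 * x + 1)) * staggeredDirac φ (2 * x + 1) := by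
  simp only [Fin.sum_univ_two, diracDyn_apply, doubleSpacing, staggeredDirac,
    Matrix.cons_val_zero, Matrix.cons_val_one, div_sub_div_same, mul_div_assoc',
    conj_div_sqrt_two_mul_div_sqrt_two]
  rw [show 2 * (x - 1) + 1 = 2 * x - 1 by ring, show 2 * (x + 1) = 2 * x + 1 + 1 by ring,
    add_sub_cancel_right]
  ring

/-- For `d = 1`, under the double-spacing map `ψ(x) = (φ(2x)/√2, φ(2x+1)/√2)`,
the Dirac-Connes action equals the staggered action. -/
theorem d1_Dirac_Connes_eq_staggered_action
    (φ : ℤ → ℂ) (hφ : (Function.support φ).Finite) :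
    let Γ1 : Matrix (Fin 2) (Fin 2) ℂ := !![0, 0; Complex.I, 0]
    let Γm1 : Matrix (Fin 2) (Fin 2) ℂ := Matrix.conjTranspose Γ1
    let ψ : ℤ → Fin 2 → ℂ :=
      fun x => ![φ (2 * x) / (Real.sqrt 2 : ℂ), φ (2 * x + 1) / (Real.sqrt 2 : ℂ)]
    let Ddyn : (ℤ → Fin 2 → ℂ) → ℤ → Fin 2 → ℂ := fun χ x =>
      Γ1.mulVec (χ (x + 1) - χ x) + Γm1.mulVec (χ (x - 1) - χ x)
    (∑ᶠ x : ℤ, ∑ i : Fin 2, (starRingEnd ℂ) (ψ x i) * Ddyn ψ x i)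
      = ∑ᶠ n : ℤ, (starRingEnd ℂ) (φ n) * (Complex.I * (φ (n + 1) - φ (n - 1)) / 2) := by
  intro Γ1 Γm1 ψ Ddyn
  have hdensity : (fun n => conj (φ n) * staggeredDirac φ n).HasFiniteSupport :=
    hφ.subset fun n hn hφn => hn (by simp [hφn])
  exact (finsum_congr (sum_conj_doubleSpacing_mul_diracDyn φ)).trans
    (finsum_eq_finsum_even_add_odd hdensity).symm
end
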